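/- Let S be a finite point set in general position and let P be a directed plane spanning path on S that is not suffix-independent. Then P contains an outward edge, i.e., an edge uv with u ∈ L_i, v ∈ L_j, and i > j, where L_0, L_1, … are the convex layers of S. -/

import Mathlib

open scoped Classical

abbrev Pt := ℝ × ℝ

/-- No three distinct points of `S` are collinear. -/
def GenPos (S : Finset Pt) : Prop :=
  ∀ p ∈ S, ∀ q ∈ S, ∀ r ∈ S, p ≠ q → q ≠ r → p ≠ r →
    ¬ Collinear ℝ ({p, q, r} : Set Pt)

/-- The (directed) edges of a path given as a list of points. -/
def edgesOf (l : List Pt) : List (Pt × Pt) := l.zip l.tail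

/-- `l` is a plane (non-crossing) spanning path of the point set `S`. -/
def PlanePath (S : Finset Pt) (l : List Pt) : Prop :=
  l.Nodup ∧ l.toFinset = S ∧
  ∀ e ∈ edgesOf l, ∀ f ∈ edgesOf l, e ≠ f →
    segment ℝ e.1 e.2 ∩ segment ℝ f.1 f.2 ⊆ ({e.1, e.2} ∩ {f.1, f.2} : Set Pt)

/-- The set of undirected edges of a path. -/
def edgeSet (l : List Pt) : Set (Sym2 Pt) :=
  {e | ∃ p ∈ edgesOf l, e = Sym2.mk p.1 p.2}

/-- A flip: remove one edge, add one new edge. -/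
def Flip (l l' : List Pt) : Prop :=
  ∃ e f : Sym2 Pt, e ∈ edgeSet l ∧ f ∉ edgeSet l ∧
    edgeSet l' = insert f (edgeSet l \ {e})

/-- A plane spanning path of `S` starting at `s`. -/
def PathIn (S : Finset Pt) (s : Pt) (l : List Pt) : Prop :=
  PlanePath S l ∧ l.head? = some s

/-- `p` is an outer point of `S` (on the boundary of the convex hull). -/
def outerPt (S : Finset Pt) (p : Pt) : Prop :=
  p ∈ S ∧ p ∈ frontier (convexHull ℝ (S : Set Pt))

/-- Points remaining after peeling `n` convex layers. -/
noncomputable def peelRes (S : Finset Pt) : ℕ → Finset Pt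
  | 0 => S
  | n + 1 => (peelRes S n).filter (fun p => ¬ outerPt (peelRes S n) p)

/-- The `i`-th convex layer. -/
noncomputable def layer (S : Finset Pt) (i : ℕ) : Finset Pt :=
  (peelRes S i).filter (fun p => outerPt (peelRes S i) p)

/-- The index of the convex layer containing `p`. -/
noncomputable def layerIdx (S : Finset Pt) (p : Pt) : ℕ := sInf {i | p ∈ layer S i}

/-- A directed path is suffix-independent if no point of a proper prefix lies in
the convex hull of the corresponding suffix. -/
def SuffixIndep (l : List Pt) : Prop :=
  ∀ i < l.length, ∀ p ∈ l.take i,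
    p ∉ convexHull ℝ (((l.drop i).toFinset : Finset Pt) : Set Pt)

/-- `u` and `v` are adjacent on the convex hull boundary of `S` (a level edge of `L₀`). -/
def LevelEdge (S : Finset Pt) (u v : Pt) : Prop :=
  u ∈ layer S 0 ∧ v ∈ layer S 0 ∧ u ≠ v ∧
    segment ℝ u v ⊆ frontier (convexHull ℝ (S : Set Pt))

/-- A path is chord-free if every edge between two hull points is a level edge. -/
def ChordFree (S : Finset Pt) (l : List Pt) : Prop :=
  ∀ e ∈ edgesOf l, e.1 ∈ layer S 0 → e.2 ∈ layer S 0 → LevelEdge S e.1 e.2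

/-- The number of `L₀`-level edges of the path `l`. -/
noncomputable def levelCount (S : Finset Pt) (l : List Pt) : ℕ :=
  Nat.card {e : Pt × Pt | e ∈ edgesOf l ∧ LevelEdge S e.1 e.2}

/-- The number of convex-hull edges of the path `l`. -/
noncomputable def hullEdgeCount (S : Finset Pt) (l : List Pt) : ℕ :=
  Nat.card {e : Pt × Pt | e ∈ edgesOf l ∧
    segment ℝ e.1 e.2 ⊆ frontier (convexHull ℝ (S : Set Pt))}

/-- `a` sees `b` with respect to the path `l`: the segment `ab` meets edges of `l`
only in common endpoints. -/
def Sees (l : List Pt) (a b : Pt) : Prop :=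
  ∀ e ∈ edgesOf l,
    segment ℝ a b ∩ segment ℝ e.1 e.2 ⊆ ({a, b} ∩ {e.1, e.2} : Set Pt)

/-- `S` is in convex position. -/
def ConvexPos (S : Finset Pt) : Prop :=
  ∀ p ∈ S, p ∉ convexHull ℝ ((S.erase p : Finset Pt) : Set Pt)

/-- A spiral from `s`: a plane spanning path starting at `s` all of whose edges lie
on the boundary of the convex hull. -/
def IsSpiral (S : Finset Pt) (s : Pt) (l : List Pt) : Prop :=
  PathIn S s l ∧ ∀ e ∈ edgesOf l,
    segment ℝ e.1 e.2 ⊆ frontier (convexHull ℝ (S : Set Pt))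

/-- Chains of flips of length `n` within the plane spanning paths of `S` starting at `s`. -/
inductive FlipChain (S : Finset Pt) (s : Pt) : List Pt → List Pt → ℕ → Prop
  | refl (l : List Pt) (h : PathIn S s l) : FlipChain S s l l 0
  | step {l m r : List Pt} {n : ℕ} (h : FlipChain S s l m n) (hr : PathIn S s r)
      (hf : Flip m r) : FlipChain S s l r (n + 1)

/-- The signed area / orientation determinant of three points. -/
def odet (a b c : Pt) : ℝ :=
  (b.1 - a.1) * (c.2 - a.2) - (b.2 - a.2) * (c.1 - a.1)

section Stmt2Aux

lemma fst_snd_repr (f : Pt →L[ℝ] ℝ) (x : Pt) : f x = f (1,0) * x.1 + f (0,1) * x.2 := by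
  have h : x = x.1 • ((1:ℝ),(0:ℝ)) + x.2 • ((0:ℝ),(1:ℝ)) := by simp [Prod.ext_iff]
  rw [h, map_add, map_smul, map_smul]
  simp [smul_eq_mul]; ring


lemma collinear_fiber {f : Pt →L[ℝ] ℝ} (hf : f ≠ 0) {c : ℝ} {s : Set Pt}
    (hs : ∀ x ∈ s, f x = c) : Collinear ℝ s := by
  rcases s.eq_empty_or_nonempty with rfl | ⟨p, hp⟩
  · exact collinear_empty ℝ _
  set α := f (1,0) with hα
  set β := f (0,1) with hβ
  have hne : α^2 + β^2 ≠ 0 := by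
    intro h0
    have hα0 : α = 0 := by nlinarith [sq_nonneg α, sq_nonneg β]
    have hβ0 : β = 0 := by nlinarith [sq_nonneg α, sq_nonneg β]
    apply hf
    apply ContinuousLinearMap.ext; intro y
    rw [fst_snd_repr f y, ← hα, ← hβ, hα0, hβ0]
    simp
  rw [collinear_iff_of_mem hp]
  refine ⟨(-β, α), fun x hx => ?_⟩
  have hx' : α * (x.1 - p.1) + β * (x.2 - p.2) = 0 := by
    have h1 := fst_snd_repr f x
    have h2 := fst_snd_repr f p
    rw [hs x hx] at h1; rw [hs p hp] at h2
    rw [← hα, ← hβ] at h1 h2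
    ring_nf
    linarith
  refine ⟨(α * (x.2 - p.2) - β * (x.1 - p.1)) / (α^2 + β^2), ?_⟩
  have h1 : x.1 = (α * (x.2 - p.2) - β * (x.1 - p.1)) / (α^2 + β^2) * (-β) + p.1 := by
    field_simp
    linear_combination α * hx'
  have h2 : x.2 = (α * (x.2 - p.2) - β * (x.1 - p.1)) / (α^2 + β^2) * α + p.2 := by
    field_simp
    linear_combination β * hx'
  rw [Prod.ext_iff]
  constructor <;> simp <;> linarith [h1, h2]

lemma exists_outer (A : Finset Pt) (hA : A.Nonempty) :
    ∃ p ∈ A, p ∈ frontier (convexHull ℝ (A : Set Pt)) := by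
  obtain ⟨p, hp, hmax⟩ := A.exists_max_image Prod.fst hA
  refine ⟨p, hp, ?_, ?_⟩
  · exact subset_closure (subset_convexHull ℝ _ hp)
  · intro hint
    obtain ⟨ε, hε, hball⟩ := Metric.isOpen_iff.mp isOpen_interior p hint
    have hsub : convexHull ℝ (A : Set Pt) ⊆ {y : Pt | y.1 ≤ p.1} := by
      apply convexHull_min
      · intro y hy; exact hmax y hy
      · exact convex_halfSpace_le ⟨fun a b => rfl, fun c a => rfl⟩ p.1
    have hq : (p + (ε/2, 0)) ∈ Metric.ball p ε := by
      have hn : ‖((ε/2 : ℝ), (0:ℝ))‖ = ε/2 := by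
        rw [Prod.norm_def]
        simp [Real.norm_eq_abs, abs_of_pos hε, abs_of_nonneg, le_of_lt hε]
        linarith
      rw [Metric.mem_ball, dist_eq_norm]
      simp only [add_sub_cancel_left, hn]
      linarith
    have := hsub (interior_subset (hball hq))
    simp at this
    linarith


lemma peelRes_subset (S : Finset Pt) : ∀ n, peelRes S n ⊆ S
  | 0 => le_refl S
  | n + 1 => (Finset.filter_subset _ _).trans (peelRes_subset S n)

lemma mem_peelRes (S : Finset Pt) (q : Pt) (hq : q ∈ S) :
    ∀ k, (∀ j < k, q ∉ layer S j) → q ∈ peelRes S k := by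
  intro k
  induction k with
  | zero => intro _; exact hq
  | succ k ih =>
    intro hj
    have h1 : q ∈ peelRes S k := ih fun j hjk => hj j (Nat.lt_succ_of_lt hjk)
    have h2 : q ∉ layer S k := hj k (Nat.lt_succ_self k)
    rw [layer, Finset.mem_filter] at h2
    rw [peelRes, Finset.mem_filter]
    exact ⟨h1, fun ho => h2 ⟨h1, ho⟩⟩

lemma exists_layer (S : Finset Pt) (q : Pt) (hq : q ∈ S) : ∃ i, q ∈ layer S i := by
  suffices h : ∀ m n, (peelRes S n).card ≤ m → q ∈ peelRes S n → ∃ i, q ∈ layer S i by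
    exact h S.card 0 (le_refl _) hq
  intro m
  induction m with
  | zero =>
    intro n hc hqn
    exact absurd (Finset.card_pos.mpr ⟨q, hqn⟩) (by omega)
  | succ m ih =>
    intro n hc hqn
    by_cases hl : q ∈ layer S n
    · exact ⟨n, hl⟩
    · have hq1 : q ∈ peelRes S (n+1) := by
        rw [layer, Finset.mem_filter] at hl
        rw [peelRes, Finset.mem_filter]
        exact ⟨hqn, fun ho => hl ⟨hqn, ho⟩⟩
      obtain ⟨x, hxA, hxf⟩ := exists_outer (peelRes S n) ⟨q, hqn⟩
      have hx1 : x ∉ peelRes S (n+1) := by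
        rw [peelRes, Finset.mem_filter]
        rintro ⟨-, hno⟩
        exact hno ⟨hxA, hxf⟩
      have hlt : (peelRes S (n+1)).card < (peelRes S n).card :=
        Finset.card_lt_card (Finset.ssubset_iff_of_subset (Finset.filter_subset _ _) |>.mpr ⟨x, hxA, hx1⟩)
      exact ih (n+1) (by omega) hq1

lemma frontier_not_in_hull (S : Finset Pt) (hS : GenPos S) (A T : Finset Pt)
    (hAS : A ⊆ S) (hTA : T ⊆ A) (p : Pt) (hpA : p ∈ A) (hpT : p ∉ T)
    (hfr : p ∈ frontier (convexHull ℝ (A : Set Pt)))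
    (hmem : p ∈ convexHull ℝ (T : Set Pt)) : False := by
  have hsmall : T.card ≤ 1 → False := by
    intro hTcard
    rcases Nat.le_one_iff_eq_zero_or_eq_one.mp hTcard with h0 | h1
    · rw [Finset.card_eq_zero.mp h0] at hmem
      simp [convexHull_empty] at hmem
    · obtain ⟨q, rfl⟩ := Finset.card_eq_one.mp h1
      rw [Finset.coe_singleton, convexHull_singleton] at hmem
      rw [hmem] at hpT
      exact hpT (Finset.mem_singleton_self q)
  by_cases hcol : Collinear ℝ (A : Set Pt)
  · have hcard : A.card ≤ 2 := by
      by_contra hc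
      push_neg at hc
      obtain ⟨a, ha, b, hb, c, hc', hab, hac, hbc⟩ := Finset.two_lt_card.mp hc
      refine hS a (hAS ha) b (hAS hb) c (hAS hc') hab hbc hac
        (hcol.subset ?_)
      intro x hx
      rcases hx with rfl | rfl | rfl <;> simpa
    have hT' : T ⊆ A.erase p := fun x hx => Finset.mem_erase.mpr ⟨fun h => hpT (h ▸ hx), hTA hx⟩
    have h1 := Finset.card_le_card hT'
    have h2 := Finset.card_erase_of_mem hpA
    exact hsmall (by omega)
  · have hAne : (A : Set Pt).Nonempty := ⟨p, hpA⟩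
    have htop : affineSpan ℝ (A : Set Pt) = ⊤ := by
      by_contra hne
      apply hcol
      have hvs : vectorSpan ℝ (A : Set Pt) ≠ ⊤ := fun h =>
        hne ((AffineSubspace.affineSpan_eq_top_iff_vectorSpan_eq_top_of_nonempty ℝ _ _ hAne).mpr h)
      have hlt : Module.finrank ℝ (vectorSpan ℝ (A : Set Pt)) < Module.finrank ℝ Pt :=
        Submodule.finrank_lt hvs
      rw [show Module.finrank ℝ Pt = 2 by simp [Module.finrank_prod]] at hlt
      exact collinear_iff_finrank_le_one.mpr (by omega)
    have hint : (interior (convexHull ℝ (A : Set Pt))).Nonempty := by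
      rw [(convex_convexHull ℝ _).interior_nonempty_iff_affineSpan_eq_top, affineSpan_convexHull]
      exact htop
    obtain ⟨a₀, ha₀⟩ := hint
    have hpni : p ∉ interior (convexHull ℝ (A : Set Pt)) := fun h => hfr.2 h
    obtain ⟨f, u, h₁, h₂⟩ := geometric_hahn_banach_open
      ((convex_convexHull ℝ _).interior) isOpen_interior (convex_singleton p)
      (Set.disjoint_singleton_right.mpr hpni)
    have h₂p : u ≤ f p := h₂ p rfl
    have hkey : ∀ x ∈ convexHull ℝ (A : Set Pt), f x ≤ u := by
      intro x hx
      by_contra hux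
      push_neg at hux
      have ha₀u : f a₀ < u := h₁ a₀ ha₀
      set t := (f x - u) / (f x - f a₀) with ht
      have hd : 0 < f x - f a₀ := by linarith
      have ht0 : 0 < t := div_pos (by linarith) hd
      have ht1 : t < 1 := (div_lt_one hd).mpr (by linarith)
      have hz : (1 - t) • x + t • a₀ ∈ interior (convexHull ℝ (A : Set Pt)) :=
        (convex_convexHull ℝ _).openSegment_self_interior_subset_interior hx ha₀
          ⟨1 - t, t, by linarith, ht0, by ring, rfl⟩
      have hlt := h₁ _ hz
      rw [map_add, map_smul, map_smul] at hlt
      simp only [smul_eq_mul] at hlt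
      have heq : (1 - t) * f x + t * f a₀ = u := by
        rw [ht]; field_simp; ring
      linarith
    have hfp : f p = u := le_antisymm (hkey p (subset_convexHull ℝ _ hpA)) h₂p
    rw [Finset.convexHull_eq] at hmem
    obtain ⟨w, hw0, hw1, hwc⟩ := hmem
    rw [Finset.centerMass_eq_of_sum_1 _ _ hw1] at hwc
    have hfy : ∀ y ∈ T, f y ≤ f p := fun y hy => by
      rw [hfp]; exact hkey y (subset_convexHull ℝ _ (hTA hy))
    have hfps : f p = ∑ y ∈ T, w y * f y := by
      rw [← hwc, map_sum]
      simp [smul_eq_mul]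
    have hsum0 : ∑ y ∈ T, w y * (f p - f y) = 0 := by
      simp only [mul_sub]
      rw [Finset.sum_sub_distrib, ← Finset.sum_mul, hw1, one_mul, ← hfps, sub_self]
    have hzero : ∀ y ∈ T, w y * (f p - f y) = 0 :=
      fun y hy => (Finset.sum_eq_zero_iff_of_nonneg
        (fun z hz => mul_nonneg (hw0 z hz) (by linarith [hfy z hz]))).mp hsum0 y hy
    set T' := T.filter (fun y => f y = f p) with hT'
    have hw0' : ∀ y ∈ T, y ∉ T' → w y = 0 := by
      intro y hy hy'
      rcases mul_eq_zero.mp (hzero y hy) with h | h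
      · exact h
      · exact absurd (Finset.mem_filter.mpr ⟨hy, by linarith⟩) hy'
    have hsum1' : ∑ y ∈ T', w y = 1 := by
      rw [Finset.sum_subset (Finset.filter_subset _ _) (fun x hx hx' => hw0' x hx hx')]
      exact hw1
    have hmem' : p ∈ convexHull ℝ (T' : Set Pt) := by
      rw [Finset.convexHull_eq]
      refine ⟨w, fun y hy => hw0 y (Finset.filter_subset _ _ hy), hsum1', ?_⟩
      rw [Finset.centerMass_eq_of_sum_1 _ _ hsum1']
      rw [Finset.sum_subset (Finset.filter_subset _ _)
        (fun x hx hx' => by simp [hw0' x hx hx'])]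
      exact hwc
    have hfne : f ≠ 0 := by
      intro h0
      rw [h0] at h₁ h₂p
      have := h₁ a₀ ha₀
      simp at this h₂p
      linarith
    by_cases hTc : T'.card ≤ 1
    · rcases Nat.le_one_iff_eq_zero_or_eq_one.mp hTc with h0 | h1
      · rw [Finset.card_eq_zero.mp h0] at hmem'
        simp [convexHull_empty] at hmem'
      · obtain ⟨q, hq⟩ := Finset.card_eq_one.mp h1
        rw [hq, Finset.coe_singleton, convexHull_singleton] at hmem'
        have : q ∈ T := Finset.filter_subset _ _ (hq ▸ Finset.mem_singleton_self q)
        rw [hmem'] at hpT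
        exact hpT this
    · push_neg at hTc
      obtain ⟨q, hq, r, hr, hqr⟩ := Finset.one_lt_card.mp hTc
      have hqT := Finset.mem_filter.mp hq
      have hrT := Finset.mem_filter.mp hr
      have hpq : p ≠ q := fun h => hpT (h ▸ hqT.1)
      have hpr : p ≠ r := fun h => hpT (h ▸ hrT.1)
      refine hS p (hAS hpA) q (hAS (hTA hqT.1)) r (hAS (hTA hrT.1)) hpq (hqr ·) hpr ?_
      apply collinear_fiber hfne (c := f p)
      intro x hx
      rcases hx with rfl | rfl | rfl
      · rfl
      · exact hqT.2
      · exact hrT.2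


end Stmt2Aux

/-- A plane spanning path that is not suffix-independent contains an
outward edge (one going from a higher convex layer to a strictly lower one). -/
theorem stmt2 (S : Finset Pt) (hS : GenPos S) (l : List Pt) (hl : PlanePath S l)
    (h : ¬ SuffixIndep l) :
    ∃ e ∈ edgesOf l, layerIdx S e.2 < layerIdx S e.1 := by
  by_contra hno
  push_neg at hno
  apply h
  intro i hi p hp hmem
  -- monotonicity of layerIdx along the path
  have hstep : ∀ j, (hj : j + 1 < l.length) →
      layerIdx S l[j] ≤ layerIdx S (l[j+1]'hj) := by
    intro j hj
    have hjz : j < (l.zip l.tail).length := by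
      simp [List.length_zip]; omega
    have hedge : (l[j]'(by omega), l[j+1]'hj) ∈ edgesOf l := by
      have : (l.zip l.tail)[j] = (l[j]'(by omega), l[j+1]'hj) := by
        simp [List.getElem_zip, List.getElem_tail]
      rw [edgesOf, ← this]
      exact List.getElem_mem hjz
    have := hno _ hedge
    simpa using Nat.le_of_not_lt (by simpa using this)
  have hmono : ∀ d a : ℕ, (hb : a + d < l.length) →
      layerIdx S (l[a]'(by omega)) ≤ layerIdx S (l[a+d]'hb) := by
    intro d
    induction d with
    | zero => intro a hb; exact le_refl _
    | succ d ih =>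
      intro a hb
      have h1 : a + d + 1 < l.length := by omega
      exact le_trans (ih a (by omega)) (hstep (a + d) h1)
  -- p is at some index a < i
  obtain ⟨a, ha, hpa⟩ := List.mem_iff_getElem.mp hp
  have halen : a < l.length := by
    have := ha; simp [List.length_take] at this; omega
  have hai : a < i := by
    have := ha; simp [List.length_take] at this; omega
  have hpa' : l[a]'halen = p := by
    rw [← hpa]; simp [List.getElem_take]
  have hpS : p ∈ S := by
    rw [← hl.2.1, List.mem_toFinset]
    exact List.mem_of_mem_take hp
  set k := layerIdx S p with hk
  have hpl : p ∈ layer S k := by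
    obtain ⟨i0, hi0⟩ := exists_layer S p hpS
    have hne : {i | p ∈ layer S i}.Nonempty := ⟨i0, hi0⟩
    exact Nat.sInf_mem hne
  rw [layer, Finset.mem_filter] at hpl
  set A := peelRes S k with hA
  -- every element of the suffix is in A
  have hTA : (l.drop i).toFinset ⊆ A := by
    intro q hq
    rw [List.mem_toFinset] at hq
    obtain ⟨j, hj, hqj⟩ := List.mem_iff_getElem.mp hq
    have hjlen : i + j < l.length := by
      simp [List.length_drop] at hj; omega
    have hq' : l[i+j]'hjlen = q := by rw [← hqj]; simp [List.getElem_drop]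
    have hqS : q ∈ S := by
      rw [← hl.2.1, List.mem_toFinset]; exact List.mem_of_mem_drop hq
    have hge : k ≤ layerIdx S q := by
      rw [hk, ← hpa', ← hq']
      have := hmono (i + j - a) a (by omega)
      have heq : a + (i + j - a) = i + j := by omega
      rw [show (l[a + (i+j-a)]'(by omega)) = (l[i+j]'hjlen) from by congr 1] at this
      exact this
    apply mem_peelRes S q hqS k
    intro j' hj' hqj'
    have : layerIdx S q ≤ j' := Nat.sInf_le hqj'
    omega
  -- p not in the suffix
  have hpT : p ∉ (l.drop i).toFinset := by
    rw [List.mem_toFinset]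
    intro hcon
    have hnd := hl.1
    rw [← List.take_append_drop i l, List.nodup_append] at hnd
    exact hnd.2.2 p hp p hcon rfl
  exact frontier_not_in_hull S hS A _ (peelRes_subset S k) hTA p hpl.1 hpT hpl.2.2 hmem
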